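/- arXiv:1903.01258 — 3 statements merged into one kernel-verified Lean document; each statement's English description precedes it below -/
import Mathlib

section
/- For every matrix A ∈ Matrix (Fin n) (Fin n) R and every index i ∈ Fin n, the formal partial derivative ∂_i is a derivation of the star product ⋆_A: ∂_i(f ⋆_A g) = (∂_i f) ⋆_A g + f ⋆_A (∂_i g) for all polynomials f, g in MvPolynomial (Fin n) R. -/
open MvPolynomial

/-- Iterated formal partial derivative `∂_{i 0} ⋯ ∂_{i (k-1)} f`. -/
noncomputable def pdMulti {n : ℕ} {R : Type*} [CommRing R] {k : ℕ}
    (i : Fin k → Fin n) (f : MvPolynomial (Fin n) R) : MvPolynomial (Fin n) R :=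
  (List.ofFn i).foldl (fun p a => pderiv a p) f

/-- The star product `f ⋆_A g` associated to a matrix `A`. -/
noncomputable def mstar {n : ℕ} {R : Type*} [CommRing R] [Algebra ℚ R]
    (A : Matrix (Fin n) (Fin n) R) (f g : MvPolynomial (Fin n) R) :
    MvPolynomial (Fin n) R :=
  ∑ᶠ k : ℕ, (k.factorial : ℚ)⁻¹ •
    ∑ i : Fin k → Fin n, ∑ j : Fin k → Fin n,
      (∏ r, A (i r) (j r)) • (pdMulti i f * pdMulti j g)

/-!
`∂_i` is a derivation that commutes with every iterated derivative `∂_{a 0} ⋯ ∂_{a (k-1)}`, so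
the Leibniz rule for each product `(∂_a f) (∂_b g)` gives the identity summand by summand. The
`k`-th summand vanishes once `k` exceeds the total degree of `f`, and `∂_i` does not raise the
total degree, so all three star products are sums over one common finite range.
-/

namespace MvPolynomial

variable {σ R : Type*} [CommRing R]

theorem pderiv_pderiv_comm (i j : σ) (f : MvPolynomial σ R) :
    pderiv i (pderiv j f) = pderiv j (pderiv i f) := by
  classical
  induction f using MvPolynomial.induction_on with
  | C a => simp
  | add p q hp hq => simp [hp, hq]
  | mul_X p k hp =>
    by_cases hik : k = i <;> by_cases hjk : k = j <;>
      simp [hp, hik, hjk, Pi.single_apply, apply_ite (pderiv i), apply_ite (pderiv j)] <;>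
      ring

theorem totalDegree_pderiv_le (i : σ) (f : MvPolynomial σ R) :
    (pderiv i f).totalDegree ≤ f.totalDegree - 1 := by
  refine Finset.sup_le fun m hm => ?_
  have hm' : m + Finsupp.single i 1 ∈ f.support := by
    rw [mem_support_iff, coeff_pderiv] at hm
    exact mem_support_iff.mpr (left_ne_zero_of_mul hm)
  have := le_totalDegree hm'
  rw [Finsupp.sum_add_index' (fun _ => rfl) (fun _ _ _ => rfl),
    Finsupp.sum_single_index rfl] at this
  omega

theorem pderiv_eq_zero_of_totalDegree_eq_zero {i : σ} {f : MvPolynomial σ R}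
    (h : f.totalDegree = 0) : pderiv i f = 0 := by
  rw [totalDegree_eq_zero_iff_eq_C.mp h, pderiv_C]

end MvPolynomial

section pdMulti

variable {n : ℕ} {R : Type*} [CommRing R]

theorem pdMulti_succ {k : ℕ} (a : Fin (k + 1) → Fin n) (f : MvPolynomial (Fin n) R) :
    pdMulti a f = pdMulti (Fin.tail a) (pderiv (a 0) f) := by
  rw [pdMulti, List.ofFn_succ, List.foldl_cons]; rfl

theorem pderiv_pdMulti {k : ℕ} (a : Fin k → Fin n) (i : Fin n) (f : MvPolynomial (Fin n) R) :
    pderiv i (pdMulti a f) = pdMulti a (pderiv i f) := by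
  induction k generalizing f with
  | zero => rfl
  | succ k ih => rw [pdMulti_succ, pdMulti_succ, ih, pderiv_pderiv_comm]

theorem totalDegree_pdMulti_le {k : ℕ} (a : Fin k → Fin n) (f : MvPolynomial (Fin n) R) :
    (pdMulti a f).totalDegree ≤ f.totalDegree - k := by
  induction k generalizing f with
  | zero => exact le_rfl
  | succ k ih =>
    rw [pdMulti_succ]
    have := totalDegree_pderiv_le (a 0) f
    exact (ih _ _).trans (by omega)

theorem pdMulti_eq_zero_of_totalDegree_lt {k : ℕ} (a : Fin k → Fin n)
    {f : MvPolynomial (Fin n) R} (h : f.totalDegree < k) : pdMulti a f = 0 := by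
  cases k with
  | zero => omega
  | succ k =>
    rw [pdMulti_succ, ← pderiv_pdMulti]
    exact pderiv_eq_zero_of_totalDegree_eq_zero <| by
      have := totalDegree_pdMulti_le (Fin.tail a) f
      omega

end pdMulti

section mstar

variable {n : ℕ} {R : Type*} [CommRing R] [Algebra ℚ R]

noncomputable def mstarTerm (A : Matrix (Fin n) (Fin n) R) (f g : MvPolynomial (Fin n) R)
    (k : ℕ) : MvPolynomial (Fin n) R :=
  (k.factorial : ℚ)⁻¹ •
    ∑ i : Fin k → Fin n, ∑ j : Fin k → Fin n,
      (∏ r, A (i r) (j r)) • (pdMulti i f * pdMulti j g)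

theorem mstarTerm_eq_zero_of_totalDegree_lt (A : Matrix (Fin n) (Fin n) R)
    {f : MvPolynomial (Fin n) R} (g : MvPolynomial (Fin n) R) {k : ℕ}
    (h : f.totalDegree < k) : mstarTerm A f g k = 0 := by
  simp [mstarTerm, pdMulti_eq_zero_of_totalDegree_lt _ h]

theorem mstar_eq_sum_range (A : Matrix (Fin n) (Fin n) R) {f : MvPolynomial (Fin n) R}
    (g : MvPolynomial (Fin n) R) {N : ℕ} (h : f.totalDegree < N) :
    mstar A f g = ∑ k ∈ Finset.range N, mstarTerm A f g k := by
  refine finsum_eq_finsetSum_of_support_subset (mstarTerm A f g) fun k hk => ?_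
  by_contra hkN
  simp only [Finset.coe_range, Set.mem_Iio, not_lt] at hkN
  exact hk (mstarTerm_eq_zero_of_totalDegree_lt A g (by omega))

theorem pderiv_mstarTerm (A : Matrix (Fin n) (Fin n) R) (i : Fin n)
    (f g : MvPolynomial (Fin n) R) (k : ℕ) :
    pderiv i (mstarTerm A f g k) =
      mstarTerm A (pderiv i f) g k + mstarTerm A f (pderiv i g) k := by
  simp only [mstarTerm, Derivation.map_smul_of_tower, map_sum, pderiv_mul, pderiv_pdMulti,
    smul_add, Finset.sum_add_distrib]

end mstar

/-- Each formal partial derivative `∂_i` is a derivation of the star product `⋆_A`. -/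
theorem pderiv_mstar {n : ℕ} {R : Type*} [CommRing R] [Algebra ℚ R]
    (A : Matrix (Fin n) (Fin n) R) (i : Fin n) (f g : MvPolynomial (Fin n) R) :
    pderiv i (mstar A f g) = mstar A (pderiv i f) g + mstar A f (pderiv i g) := by
  have hf : f.totalDegree < f.totalDegree + 1 := Nat.lt_succ_self _
  have hf' : (pderiv i f).totalDegree < f.totalDegree + 1 :=
    (totalDegree_pderiv_le i f).trans_lt (by omega)
  rw [mstar_eq_sum_range A g hf, mstar_eq_sum_range A g hf', mstar_eq_sum_range A _ hf,
    map_sum, ← Finset.sum_add_distrib]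
  exact Finset.sum_congr rfl fun k _ => pderiv_mstarTerm A i f g k
end

section
/- In R[X], for every b ∈ R and every polynomial p, one has T_b(X·p) = X·T_b(p) + b·T_b(p'). Consequently, the Wick powers W_k := T_{−a}(X^k) (for a fixed a ∈ R) satisfy W_0 = 1, W_1 = X, W_k' = k·W_{k−1} for all k ≥ 1, and the three-term recursion W_{k+1} = X·W_k − a·k·W_{k−1} for all k ≥ 1; in particular, for a = 1 the sequence (W_k) coincides with the sequence of probabilists' Hermite polynomials determined by He_0 = 1 and He_{k+1} = X·He_k − He_k'. -/
open Polynomial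

/-- The star product `f ⋆_a g = Σ_k (a^k/k!) f^{(k)} g^{(k)}` on `R[X]`. -/
noncomputable def ustar {R : Type*} [CommRing R] [Algebra ℚ R] (a : R)
    (f g : R[X]) : R[X] :=
  ∑ᶠ k : ℕ, (k.factorial : ℚ)⁻¹ •
    (a ^ k • ((⇑Polynomial.derivative)^[k] f * (⇑Polynomial.derivative)^[k] g))

/-- The operator `T_a f = Σ_m (a^m/(2^m m!)) f^{(2m)}` on `R[X]`. -/
noncomputable def uT {R : Type*} [CommRing R] [Algebra ℚ R] (a : R)
    (f : R[X]) : R[X] :=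
  ∑ᶠ m : ℕ, ((2 : ℚ) ^ m * m.factorial)⁻¹ •
    (a ^ m • (⇑Polynomial.derivative)^[2 * m] f)

/-! Since `(X p)^{(n)} = X p^{(n)} + n p^{(n-1)}`, applying `T_b` to `X p` produces
`X T_b p` plus a sum whose `m`-th term is `2m/(2^m m!) b^m p^{(2m-1)} = b · b^{m-1}/(2^{m-1}(m-1)!)
(p')^{(2(m-1))}`, i.e. `b T_b p'`. Since `T_b` commutes with differentiation, the Wick powers
then satisfy `W_{k+1} = X W_k - a W_k' = X W_k - a k W_{k-1}`, which for `a = 1` is the Hermite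
recursion. -/

section

variable {R : Type*} [CommRing R] [Algebra ℚ R]

theorem uT_eq_sum_range (a : R) (f : R[X]) {N : ℕ} (hN : f.natDegree < 2 * N) :
    uT a f = ∑ m ∈ Finset.range N, ((2 : ℚ) ^ m * m.factorial)⁻¹ •
      (a ^ m • derivative^[2 * m] f) := by
  refine finsum_eq_finsetSum_of_support_subset _ fun m hm => ?_
  by_contra hmN
  have hdeg : f.natDegree < 2 * m := by
    simp only [Finset.coe_range, Set.mem_Iio, not_lt] at hmN; omega
  simp [iterate_derivative_eq_zero hdeg] at hm

theorem uT_smul (a r : R) (f : R[X]) : uT a (r • f) = r • uT a f := by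
  rw [uT_eq_sum_range a f (N := f.natDegree + 1) (by omega),
    uT_eq_sum_range a (r • f) (N := f.natDegree + 1) (by have := natDegree_smul_le r f; omega),
    Finset.smul_sum]
  refine Finset.sum_congr rfl fun m _ => ?_
  rw [iterate_derivative_smul, smul_comm (a ^ m), smul_comm _ r]

theorem derivative_uT (a : R) (f : R[X]) :
    derivative (uT a f) = uT a (derivative f) := by
  rw [uT_eq_sum_range a f (N := f.natDegree + 1) (by omega),
    uT_eq_sum_range a (derivative f) (N := f.natDegree + 1)
      (by have := natDegree_derivative_le f; omega), map_sum]
  refine Finset.sum_congr rfl fun m _ => ?_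
  rw [derivative_smul, derivative_smul, ← Function.iterate_succ_apply' derivative,
    Function.iterate_succ_apply]

theorem uT_one (a : R) : uT a 1 = 1 := by
  simp [uT_eq_sum_range a (1 : R[X]) (N := 1) (by simp)]

theorem uT_X (a : R) : uT a X = X := by
  rw [uT_eq_sum_range a X (N := 1) (by have := natDegree_X_le (R := R); omega)]
  simp

theorem two_mul_succ_mul_inv_two_pow_mul_factorial (m : ℕ) :
    ((2 * (m + 1) : ℕ) : ℚ) * ((2 : ℚ) ^ (m + 1) * (m + 1).factorial)⁻¹ =
      ((2 : ℚ) ^ m * m.factorial)⁻¹ := by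
  rw [Nat.factorial_succ]
  push_cast
  field_simp
  ring

theorem uT_X_mul (b : R) (p : R[X]) :
    uT b (X * p) = X * uT b p + b • uT b (derivative p) := by
  set N := p.natDegree + 1
  rw [uT_eq_sum_range b (X * p) (N := N + 1)
      (by have := natDegree_mul_le (p := X) (q := p); have := natDegree_X_le (R := R); omega),
    uT_eq_sum_range b p (N := N + 1) (by omega),
    uT_eq_sum_range b (derivative p) (N := N) (by have := natDegree_derivative_le p; omega)]
  simp_rw [mul_comm X p, iterate_derivative_mul_X, smul_add, Finset.sum_add_distrib,
    Finset.mul_sum, mul_comm X, smul_mul_assoc]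
  congr 1
  rw [Finset.sum_range_succ', Finset.smul_sum]
  simp only [mul_zero, zero_smul, smul_zero, add_zero]
  refine Finset.sum_congr rfl fun j _ => ?_
  rw [show 2 * (j + 1) - 1 = 2 * j + 1 by omega, Function.iterate_succ_apply,
    ← Nat.cast_smul_eq_nsmul ℚ, smul_comm (b ^ _), smul_smul, mul_comm,
    two_mul_succ_mul_inv_two_pow_mul_factorial, pow_succ', mul_smul, smul_comm _ b]

theorem uT_X_pow_succ (b : R) (k : ℕ) :
    uT b (X ^ (k + 1)) = X * uT b (X ^ k) + b • derivative (uT b (X ^ k)) := by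
  rw [pow_succ', uT_X_mul, derivative_uT]

theorem derivative_uT_X_pow (a : R) (k : ℕ) :
    derivative (uT a (X ^ k)) = k • uT a (X ^ (k - 1)) := by
  rw [derivative_uT, derivative_X_pow, C_mul', uT_smul, Nat.cast_smul_eq_nsmul]

theorem uT_neg_one_X_pow_eq_of_hermite_rec {He : ℕ → R[X]} (h0 : He 0 = 1)
    (hrec : ∀ k, He (k + 1) = X * He k - derivative (He k)) (k : ℕ) :
    uT (-1) (X ^ k) = He k := by
  induction k with
  | zero => rw [pow_zero, uT_one, h0]
  | succ k ih => rw [uT_X_pow_succ, ih, hrec, neg_one_smul, sub_eq_add_neg]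

end

/-- `T_b(X·p) = X·T_b(p) + b·T_b(p')`; consequently the Wick powers
`W_k := T_{-a}(X^k)` satisfy `W_0 = 1`, `W_1 = X`, `W_k' = k·W_{k-1}` and the
three-term recursion `W_{k+1} = X·W_k − a·k·W_{k-1}`; for `a = 1` they coincide
with the probabilists' Hermite polynomials determined by `He_0 = 1` and
`He_{k+1} = X·He_k − He_k'`. -/
theorem uT_mul_X_and_wick {R : Type*} [CommRing R] [Algebra ℚ R] :
    (∀ (b : R) (p : R[X]),
        uT b (X * p) = X * uT b p + b • uT b (Polynomial.derivative p)) ∧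
    ∀ a : R,
      uT (-a) ((X : R[X]) ^ 0) = 1 ∧
      uT (-a) ((X : R[X]) ^ 1) = X ∧
      (∀ k : ℕ, 1 ≤ k →
        Polynomial.derivative (uT (-a) ((X : R[X]) ^ k)) =
          k • uT (-a) ((X : R[X]) ^ (k - 1))) ∧
      (∀ k : ℕ, 1 ≤ k →
        uT (-a) ((X : R[X]) ^ (k + 1)) =
          X * uT (-a) ((X : R[X]) ^ k) - a • (k • uT (-a) ((X : R[X]) ^ (k - 1)))) ∧
      (a = 1 → ∀ He : ℕ → R[X], He 0 = 1 →
        (∀ k : ℕ, He (k + 1) = X * He k - Polynomial.derivative (He k)) →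
        ∀ k : ℕ, uT (-a) ((X : R[X]) ^ k) = He k) := by
  refine ⟨uT_X_mul, fun a => ⟨by rw [pow_zero, uT_one], by rw [pow_one, uT_X],
    fun k _ => derivative_uT_X_pow (-a) k, fun k _ => ?_, ?_⟩⟩
  · rw [uT_X_pow_succ, derivative_uT_X_pow, neg_smul, sub_eq_add_neg]
  · rintro rfl He h0 hrec
    exact uT_neg_one_X_pow_eq_of_hermite_rec h0 hrec
end

section
/- In R[X], for all m, n ∈ ℕ and every a ∈ R, the constant coefficient of the star product X^m ⋆_a X^n equals n! · a^n if m = n, and equals 0 if m ≠ n. -/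
/-! Only the `k = m` summand of `X ^ m ⋆_a X ^ n` has a nonzero constant coefficient, since the
`k`-th derivative of `X ^ m` has constant coefficient `m!` if `k = m` and `0` otherwise. That
summand is `(m!)⁻¹ a ^ m m! n!` when `m = n` and vanishes when `m ≠ n`. -/

open Polynomial

namespace Polynomial

theorem coeff_zero_iterate_derivative_X_pow {R : Type*} [Semiring R] (k m : ℕ) :
    (derivative^[k] (X ^ m : R[X])).coeff 0 = if k = m then (m.factorial : R) else 0 := by
  rw [coeff_iterate_derivative, zero_add, Nat.descFactorial_self, coeff_X_pow, nsmul_eq_mul]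
  split_ifs with h
  · rw [h, mul_one]
  · rw [mul_zero]

end Polynomial

theorem inv_natCast_smul_nsmul {M : Type*} [AddCommGroup M] [Module ℚ M] {n : ℕ} (hn : n ≠ 0)
    (x : M) : (n : ℚ)⁻¹ • (n • x) = x := by
  rw [← Nat.cast_smul_eq_nsmul ℚ, inv_smul_smul₀ (Nat.cast_ne_zero.2 hn)]

theorem ustar_eq_sum_range {R : Type*} [CommRing R] [Algebra ℚ R] (a : R) (f g : R[X])
    {N : ℕ} (hN : f.natDegree < N) :
    ustar a f g = ∑ k ∈ Finset.range N, (k.factorial : ℚ)⁻¹ •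
      (a ^ k • (derivative^[k] f * derivative^[k] g)) := by
  refine finsum_eq_sum_of_support_subset _ fun k hk => ?_
  by_contra hkN
  simp only [Finset.coe_range, Set.mem_Iio, not_lt] at hkN
  simp [iterate_derivative_eq_zero (hN.trans_le hkN)] at hk

/-- The constant coefficient of `X^m ⋆_a X^n` is `n!·a^n` if `m = n` and `0` otherwise. -/
theorem ustar_X_pow_coeff_zero {R : Type*} [CommRing R] [Algebra ℚ R] (a : R) (m n : ℕ) :
    (ustar a ((X : R[X]) ^ m) ((X : R[X]) ^ n)).coeff 0 =
      if m = n then (n.factorial : R) * a ^ n else 0 := by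
  rw [ustar_eq_sum_range a _ _ ((natDegree_X_pow_le m).trans_lt m.lt_succ_self),
    finsetSum_coeff, Finset.sum_eq_single m]
  · simp only [coeff_smul, mul_coeff_zero, coeff_zero_iterate_derivative_X_pow, if_true]
    split_ifs with hmn
    · subst hmn
      rw [smul_eq_mul, mul_left_comm, ← nsmul_eq_mul, inv_natCast_smul_nsmul m.factorial_ne_zero,
        mul_comm]
    · simp
  · intro k _ hkm
    simp [coeff_zero_iterate_derivative_X_pow, hkm]
  · intro hm
    exact absurd (Finset.self_mem_range_succ m) hm
end
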